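/- arXiv:2112.02911 — 4 statements merged into one kernel-verified Lean document; each statement's English description precedes it below -/
import Mathlib

section
/- Let p be a prime, ξ a primitive p-th root of unity in ℂ, and a_0, ..., a_{p-1} nonnegative integers such that Σ_i a_i = p, Σ_i a_i^2 = 2p - 1, and for every u ∈ ℤ/pℤ with u ≠ 0, Σ_{i ∈ ℤ/pℤ} a_i · a_{i+u} = p - 1 (indices mod p). Then |Σ_{i=0}^{p-1} a_i ξ^i|^2 = p. -/
/-!
The sum is the value at `ψ = zmodChar p ξ` of the Fourier transform `∑ aᵢ ψ(i)` of `a`, and its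
squared modulus is the Fourier transform of the autocorrelation `u ↦ ∑ᵢ a_{i+u} aᵢ`. By hypothesis
the autocorrelation is `2p - 1` at `0` and the constant `p - 1` elsewhere; since the values of a
nontrivial character sum to zero, a constant off `0` contributes only through `ψ(0) = 1`, leaving
`(2p - 1) - (p - 1) = p`.
-/

open Finset ComplexConjugate

namespace AddChar

variable {G : Type*} [AddCommGroup G] [Fintype G]

lemma sum_mul_eq_sub_of_eq_off_zero {R : Type*} [CommRing R] [IsDomain R] {ψ : AddChar G R}
    (hψ : ψ ≠ 1) {g : G → R} {c : R} (hg : ∀ u ≠ 0, g u = c) :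
    ∑ u, g u * ψ u = g 0 - c := by
  have hsplit : ∑ u, g u * ψ u = ∑ u, (g u - c) * ψ u + c * ∑ u, ψ u := by
    rw [mul_sum, ← sum_add_distrib]
    exact sum_congr rfl fun u _ => by ring
  rw [hsplit, sum_eq_zero_of_ne_one hψ, mul_zero, add_zero,
    Fintype.sum_eq_single 0 fun u hu => by rw [hg u hu, sub_self, zero_mul],
    map_zero_eq_one, mul_one]

lemma sq_norm_sum_mul_eq_sum_autocorrelation (ψ : AddChar G ℂ) (f : G → ℂ) :
    (‖∑ i, f i * ψ i‖ : ℂ) ^ 2 = ∑ u, (∑ j, f (j + u) * conj (f j)) * ψ u := by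
  rw [← Complex.mul_conj', map_sum, sum_mul_sum, sum_comm]
  simp_rw [sum_mul]
  conv_rhs => rw [sum_comm]
  refine sum_congr rfl fun j _ => ?_
  rw [← Equiv.sum_comp (Equiv.addLeft j)]
  refine sum_congr rfl fun u _ => ?_
  simp only [Equiv.coe_addLeft]
  rw [map_mul, ← map_neg_eq_conj, mul_mul_mul_comm, ← map_add_eq_mul, add_neg_cancel_comm]

end AddChar

theorem stmt4_general (p : ℕ) [hp : Fact p.Prime] (ξ : ℂ) (hξ : IsPrimitiveRoot ξ p)
    (a : ZMod p → ℕ)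
    (h2 : ∑ i : ZMod p, (a i) ^ 2 = 2 * p - 1)
    (h3 : ∀ u : ZMod p, u ≠ 0 → ∑ i : ZMod p, a i * a (i + u) = p - 1) :
    ‖∑ i : ZMod p, (a i : ℂ) * ξ ^ (i.val)‖ ^ 2 = p := by
  set ψ := AddChar.zmodChar p hξ.pow_eq_one
  have hψ : ψ ≠ 1 := by
    rw [AddChar.zmod_char_ne_one_iff, ← Nat.cast_one, AddChar.zmodChar_apply', pow_one]
    exact hξ.ne_one hp.out.one_lt
  have hcorr : ∀ u, ∑ j, (a (j + u) : ℂ) * conj (a j : ℂ) = (∑ j, a j * a (j + u) : ℕ) := by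
    intro u
    push_cast
    exact sum_congr rfl fun j _ => by rw [Complex.conj_natCast, mul_comm]
  have hsq : ∑ j, a j * a (j + 0) = (p - 1) + p := by
    simp only [add_zero, ← sq, h2]
    have := hp.out.one_le
    omega
  have hfourier : ∑ u, ((∑ j, a j * a (j + u) : ℕ) : ℂ) * ψ u = p := by
    rw [AddChar.sum_mul_eq_sub_of_eq_off_zero hψ (c := ((p - 1 : ℕ) : ℂ))
      (fun u hu => by rw [h3 u hu]), hsq, Nat.cast_add, add_sub_cancel_left]
  have key := AddChar.sq_norm_sum_mul_eq_sum_autocorrelation ψ (fun i => (a i : ℂ))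
  simp only [hcorr, hfourier] at key
  exact_mod_cast key

theorem stmt4 (p : ℕ) [hp : Fact p.Prime] (ξ : ℂ) (hξ : IsPrimitiveRoot ξ p)
    (a : ZMod p → ℕ)
    (h1 : ∑ i : ZMod p, a i = p)
    (h2 : ∑ i : ZMod p, (a i) ^ 2 = 2 * p - 1)
    (h3 : ∀ u : ZMod p, u ≠ 0 → ∑ i : ZMod p, a i * a (i + u) = p - 1) :
    ‖∑ i : ZMod p, (a i : ℂ) * ξ ^ (i.val)‖ ^ 2 = p :=
  stmt4_general p (hp := hp) ξ hξ a h2 h3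
end

section
/- Let (Ω, S) be an association scheme and r, s ∈ S. Then the number of t ∈ S with c(r,s,t) > 0 is at most gcd(n_r, n_s). -/
open Finset
open scoped Classical

/-- A coherent configuration on a finite set `Ω`: a partition `S` of `Ω × Ω` into nonempty
relations such that the diagonal is a union of relations, `S` is closed under transposition,
and the intersection numbers `c r s u` are well defined. -/
structure CoherentConfig (Ω : Type) [Fintype Ω] [DecidableEq Ω] where
  S : Finset (Finset (Ω × Ω))
  nonempty_mem : ∀ s ∈ S, s.Nonempty
  partition : ∀ x : Ω × Ω, ∃! s, s ∈ S ∧ x ∈ s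
  diag_union : ∀ s ∈ S, (∃ x ∈ s, x.1 = x.2) → ∀ y ∈ s, y.1 = y.2
  symm_mem : ∀ s ∈ S, s.image Prod.swap ∈ S
  c : Finset (Ω × Ω) → Finset (Ω × Ω) → Finset (Ω × Ω) → ℕ
  c_spec : ∀ r ∈ S, ∀ s ∈ S, ∀ u ∈ S, ∀ x ∈ u,
    (Finset.univ.filter (fun γ : Ω => (x.1, γ) ∈ r ∧ (γ, x.2) ∈ s)).card = c r s u

variable {Ω : Type} [Fintype Ω] [DecidableEq Ω]


/-- An association scheme: a coherent configuration in which the diagonal is a single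
basis relation. -/
structure AssocScheme (Ω : Type) [Fintype Ω] [DecidableEq Ω] extends CoherentConfig Ω where
  homog : Finset.univ.filter (fun x : Ω × Ω => x.1 = x.2) ∈ S

/-- The diagonal relation `1_Ω`. -/
def diagAll (Ω : Type) [Fintype Ω] [DecidableEq Ω] : Finset (Ω × Ω) :=
  Finset.univ.filter (fun x : Ω × Ω => x.1 = x.2)

/-- The valency `n_s = c(s, s*, 1_Ω)` of a basis relation. -/
def nval (A : AssocScheme Ω) (s : Finset (Ω × Ω)) : ℕ :=
  A.c s (s.image Prod.swap) (diagAll Ω)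

/-!
Count the triangles `(x, y, z)` with `(x, y) ∈ r`, `(y, z) ∈ s`, `(x, z) ∈ t`: by the base
`(x, z)` they number `|Ω| n_t c(r,s,t)`, and by rotating the triangle also
`|Ω| n_r c(s,t*,r*)` and `|Ω| n_s c(t*,r,s*)`. Hence `lcm(n_r, n_s)` divides `n_t c(r,s,t)`,
which is therefore at least `lcm(n_r, n_s)` whenever `t ∈ rs`. Summing over all `t` counts the
paths `x → y → z` with `(x, y) ∈ r` and `(y, z) ∈ s`, so `∑ₜ n_t c(r,s,t) = n_r n_s`, and
`|rs| · lcm(n_r, n_s) ≤ n_r n_s = gcd(n_r, n_s) · lcm(n_r, n_s)`.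
-/

lemma mem_image_swap {α β : Type*} [DecidableEq (β × α)] {u : Finset (α × β)} {a : α} {b : β} :
    (b, a) ∈ u.image Prod.swap ↔ (a, b) ∈ u := by
  simp

lemma image_swap_image_swap {α β : Type*} [DecidableEq (α × β)] [DecidableEq (β × α)]
    (u : Finset (α × β)) : (u.image Prod.swap).image Prod.swap = u := by
  simp [image_image]

lemma card_filter_eq_sum_sum_sum {α β γ : Type*} [Fintype α] [Fintype β] [Fintype γ]
    (p : α × β × γ → Prop) [DecidablePred p] :
    #(univ.filter p) = ∑ x, ∑ y, ∑ z, if p (x, y, z) then 1 else 0 := by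
  simp only [card_filter, Fintype.sum_prod_type]

lemma sum_sum_ite_mem {α β M : Type*} [Fintype α] [Fintype β] [DecidableEq (α × β)]
    [AddCommMonoid M] (t : Finset (α × β)) (a : M) :
    ∑ x, ∑ y, (if (x, y) ∈ t then a else 0) = #t • a := by
  rw [← Fintype.sum_prod_type', sum_ite_mem, univ_inter, sum_const]

def triangles (r s t : Finset (Ω × Ω)) : Finset (Ω × Ω × Ω) :=
  univ.filter fun p => (p.1, p.2.1) ∈ r ∧ (p.2.1, p.2.2) ∈ s ∧ (p.1, p.2.2) ∈ t

def paths (r s : Finset (Ω × Ω)) : Finset (Ω × Ω × Ω) :=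
  univ.filter fun p => (p.1, p.2.1) ∈ r ∧ (p.2.1, p.2.2) ∈ s

lemma card_triangles_rotate (r s t : Finset (Ω × Ω)) :
    #(triangles r s t) = #(triangles s (t.image Prod.swap) (r.image Prod.swap)) :=
  card_equiv ⟨fun p => (p.2.1, p.2.2, p.1), fun p => (p.2.2, p.1, p.2.1), fun _ => rfl,
    fun _ => rfl⟩ fun p => by simp only [triangles, mem_filter, mem_univ, true_and,
      Equiv.coe_fn_mk, mem_image_swap]; tauto

namespace CoherentConfig

variable (C : CoherentConfig Ω) {r s t : Finset (Ω × Ω)}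

lemma fintype_card_pos (ht : t ∈ C.S) : 0 < Fintype.card Ω :=
  Fintype.card_pos_iff.mpr ⟨(C.nonempty_mem t ht).choose.1⟩

lemma card_triangles (hr : r ∈ C.S) (hs : s ∈ C.S) (ht : t ∈ C.S) :
    #(triangles r s t) = #t * C.c r s t := by
  rw [triangles, card_filter_eq_sum_sum_sum, ← smul_eq_mul, ← sum_sum_ite_mem]
  refine sum_congr rfl fun x _ => ?_
  rw [sum_comm]
  refine sum_congr rfl fun z _ => ?_
  by_cases hxz : (x, z) ∈ t
  · simp only [hxz, and_true, if_true, ← C.c_spec r hr s hs t ht (x, z) hxz, card_filter]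
  · simp [hxz]

lemma sum_card_triangles :
    ∑ t ∈ C.S, #(triangles r s t) = #(paths r s) := by
  rw [← card_biUnion]
  · congr 1
    ext p
    simp only [triangles, paths, mem_biUnion, mem_filter, mem_univ, true_and]
    constructor
    · rintro ⟨t, -, hr, hs, -⟩
      exact ⟨hr, hs⟩
    · rintro ⟨hr, hs⟩
      obtain ⟨t, ⟨ht, hp⟩, -⟩ := C.partition (p.1, p.2.2)
      exact ⟨t, ht, hr, hs, hp⟩
  · intro t ht t' ht' hne
    refine disjoint_left.mpr fun p hp hp' => hne ?_
    simp only [triangles, mem_filter] at hp hp'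
    exact (C.partition (p.1, p.2.2)).unique ⟨ht, hp.2.2.2⟩ ⟨ht', hp'.2.2.2⟩

end CoherentConfig

namespace AssocScheme

variable (A : AssocScheme Ω) {r s t : Finset (Ω × Ω)}

lemma card_filter_mem_eq_nval (ht : t ∈ A.S) (x : Ω) :
    #(univ.filter fun z => (x, z) ∈ t) = nval A t := by
  rw [nval, diagAll, ← A.c_spec t ht _ (A.symm_mem t ht) _ A.homog (x, x) (by simp)]
  simp only [mem_image_swap, and_self]

lemma nval_pos (ht : t ∈ A.S) : 0 < nval A t := by
  obtain ⟨⟨x, z⟩, hxz⟩ := A.nonempty_mem t ht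
  rw [← A.card_filter_mem_eq_nval ht x]
  exact card_pos.mpr ⟨z, by simpa using hxz⟩

lemma card_eq_card_mul_nval (ht : t ∈ A.S) : #t = Fintype.card Ω * nval A t := by
  rw [← mul_one #t, ← smul_eq_mul, ← sum_sum_ite_mem]
  simp only [← card_filter, A.card_filter_mem_eq_nval ht, sum_const, card_univ, smul_eq_mul]

lemma card_paths (hs : s ∈ A.S) : #(paths r s) = #r * nval A s := by
  rw [paths, card_filter_eq_sum_sum_sum, ← smul_eq_mul, ← sum_sum_ite_mem]
  refine sum_congr rfl fun x _ => sum_congr rfl fun y _ => ?_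
  by_cases hxy : (x, y) ∈ r
  · simp only [hxy, true_and, if_true, ← card_filter, A.card_filter_mem_eq_nval hs]
  · simp [hxy]

lemma card_triangles_eq_card_mul (hr : r ∈ A.S) (hs : s ∈ A.S) (ht : t ∈ A.S) :
    #(triangles r s t) = Fintype.card Ω * (nval A t * A.c r s t) := by
  rw [A.card_triangles hr hs ht, A.card_eq_card_mul_nval ht, mul_assoc]

lemma nval_mul_c_eq_left (hr : r ∈ A.S) (hs : s ∈ A.S) (ht : t ∈ A.S) :
    nval A t * A.c r s t = nval A r * A.c s (t.image Prod.swap) (r.image Prod.swap) := by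
  refine Nat.eq_of_mul_eq_mul_left (A.fintype_card_pos hr) ?_
  rw [← A.card_triangles_eq_card_mul hr hs ht, card_triangles_rotate, A.card_triangles hs
    (A.symm_mem t ht) (A.symm_mem r hr), card_image_of_injective _ Prod.swap_injective,
    A.card_eq_card_mul_nval hr, mul_assoc]

lemma nval_mul_c_eq_right (hr : r ∈ A.S) (hs : s ∈ A.S) (ht : t ∈ A.S) :
    nval A t * A.c r s t = nval A s * A.c (t.image Prod.swap) r (s.image Prod.swap) := by
  refine Nat.eq_of_mul_eq_mul_left (A.fintype_card_pos hr) ?_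
  have hrot := card_triangles_rotate (t.image Prod.swap) r (s.image Prod.swap)
  rw [image_swap_image_swap, image_swap_image_swap] at hrot
  rw [← A.card_triangles_eq_card_mul hr hs ht, ← hrot,
    A.card_triangles (A.symm_mem t ht) hr (A.symm_mem s hs),
    card_image_of_injective _ Prod.swap_injective, A.card_eq_card_mul_nval hs, mul_assoc]

lemma lcm_nval_dvd (hr : r ∈ A.S) (hs : s ∈ A.S) (ht : t ∈ A.S) :
    Nat.lcm (nval A r) (nval A s) ∣ nval A t * A.c r s t :=
  Nat.lcm_dvd ⟨_, A.nval_mul_c_eq_left hr hs ht⟩ ⟨_, A.nval_mul_c_eq_right hr hs ht⟩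

lemma sum_nval_mul_c (hr : r ∈ A.S) (hs : s ∈ A.S) :
    ∑ t ∈ A.S, nval A t * A.c r s t = nval A r * nval A s := by
  refine Nat.eq_of_mul_eq_mul_left (A.fintype_card_pos hr) ?_
  rw [mul_sum, ← sum_congr rfl fun t ht => A.card_triangles_eq_card_mul hr hs ht,
    A.sum_card_triangles, A.card_paths hs, A.card_eq_card_mul_nval hr, mul_assoc]

end AssocScheme

theorem stmt9 (A : AssocScheme Ω) (r s : Finset (Ω × Ω))
    (hr : r ∈ A.S) (hs : s ∈ A.S) :
    (A.S.filter fun t => A.c r s t ≠ 0).card ≤ Nat.gcd (nval A r) (nval A s) := by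
  have hlcm : 0 < Nat.lcm (nval A r) (nval A s) := Nat.lcm_pos (A.nval_pos hr) (A.nval_pos hs)
  refine Nat.le_of_mul_le_mul_right ?_ hlcm
  calc #(A.S.filter fun t => A.c r s t ≠ 0) * Nat.lcm (nval A r) (nval A s)
      ≤ ∑ t ∈ A.S.filter (fun t => A.c r s t ≠ 0), nval A t * A.c r s t := by
        refine card_nsmul_le_sum _ _ _ fun t ht => ?_
        obtain ⟨ht, hc⟩ := mem_filter.mp ht
        exact Nat.le_of_dvd (Nat.mul_pos (A.nval_pos ht) (Nat.pos_of_ne_zero hc))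
          (A.lcm_nval_dvd hr hs ht)
    _ ≤ ∑ t ∈ A.S, nval A t * A.c r s t := sum_le_sum_of_subset (filter_subset _ _)
    _ = nval A r * nval A s := A.sum_nval_mul_c hr hs
    _ = Nat.gcd (nval A r) (nval A s) * Nat.lcm (nval A r) (nval A s) :=
        (Nat.gcd_mul_lcm _ _).symm
end

section
/- Let (Ω, S) be a coherent configuration whose fibers Ω₁, ..., Ω_m each carry a subscheme isomorphic to C_p ≀ C_p (the wreath product scheme of degree p², with thin radical of order p and all other valencies p), and assume every relation between distinct fibers has valency p. Let s ∈ S_{ij} (i ≠ j) be regular, i.e., ss*s = {s}. Then σ_s σ_{s*} = p · Σ_{t ∈ O_θ(S_i)} σ_t, where O_θ(S_i) is the set of thin relations of the fiber scheme S_i and σ denotes adjacency matrices. In particular, the complex product ss* equals O_θ(S_i). -/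
open Finset
open scoped Classical

variable {Ω : Type} [Fintype Ω] [DecidableEq Ω]

/-- The diagonal relation of a subset `Δ ⊆ Ω`. -/
def diagRel (Δ : Finset Ω) : Finset (Ω × Ω) := Δ.image (fun d => (d, d))

/-- `Δ` is a fiber of the coherent configuration if its diagonal is a basis relation. -/
def IsFiber (A : CoherentConfig Ω) (Δ : Finset Ω) : Prop := diagRel Δ ∈ A.S

/-- The transpose of a relation. -/
def star (s : Finset (Ω × Ω)) : Finset (Ω × Ω) := s.image Prod.swap

/-- Every point in the domain of `s` has exactly `n` out-neighbours along `s`. -/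
def HasValency (s : Finset (Ω × Ω)) (n : ℕ) : Prop :=
  ∀ x ∈ s, (Finset.univ.filter fun γ : Ω => (x.1, γ) ∈ s).card = n

/-- `s` is a thin basis relation of the fiber scheme on `Δ`. -/
def IsThinOn (A : CoherentConfig Ω) (Δ : Finset Ω) (s : Finset (Ω × Ω)) : Prop :=
  s ∈ A.S ∧ s ⊆ Δ ×ˢ Δ ∧ HasValency s 1

/-- The complex product of two sets of basis relations. -/
def cprod (A : CoherentConfig Ω) (T U : Finset (Finset (Ω × Ω))) : Finset (Finset (Ω × Ω)) :=
  A.S.filter fun u => ∃ t ∈ T, ∃ v ∈ U, A.c t v u ≠ 0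

/-- `s` is a regular relation: `s s* s = {s}` as a complex product. -/
def Regular (A : CoherentConfig Ω) (s : Finset (Ω × Ω)) : Prop :=
  cprod A (cprod A {s} {star s}) {s} = {s}

/-- The fiber scheme on `Δ` is isomorphic to the wreath product `C_p ≀ C_p`:
it has degree `p²`, exactly `p` thin relations forming a closed subset,
and all other basis relations have valency `p`. -/
def WreathFiber (p : ℕ) (A : CoherentConfig Ω) (Δ : Finset Ω) : Prop :=
  IsFiber A Δ ∧ Δ.card = p ^ 2 ∧
  (A.S.filter fun s => IsThinOn A Δ s).card = p ∧
  (∀ s ∈ A.S, s ⊆ Δ ×ˢ Δ → HasValency s 1 ∨ HasValency s p) ∧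
  (∀ s t u : Finset (Ω × Ω), IsThinOn A Δ s → IsThinOn A Δ t → u ∈ A.S →
    A.c s (star t) u ≠ 0 → IsThinOn A Δ u)

/-- The adjacency matrix of a relation. -/
def adjM (s : Finset (Ω × Ω)) : Matrix Ω Ω ℂ := fun α β => if (α, β) ∈ s then 1 else 0


/-! ### Auxiliary definitions and lemmas -/

/-- Out-degree of `α` in the relation `w`. -/
def ccDeg (w : Finset (Ω × Ω)) (α : Ω) : ℕ :=
  (Finset.univ.filter fun γ : Ω => (α, γ) ∈ w).card

/-- Number of paths from `α` to `β` through `r` then `v`. -/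
def ccCnt (r v : Finset (Ω × Ω)) (α β : Ω) : ℕ :=
  (Finset.univ.filter fun γ : Ω => (α, γ) ∈ r ∧ (γ, β) ∈ v).card

lemma mem_star_iff {s : Finset (Ω × Ω)} {a b : Ω} : (a, b) ∈ star s ↔ (b, a) ∈ s := by
  constructor
  · intro h
    obtain ⟨⟨x, y⟩, hxy, hswap⟩ := Finset.mem_image.mp h
    obtain ⟨h1, h2⟩ := Prod.mk.injEq .. ▸ hswap
    simpa [← h1, ← h2] using hxy
  · intro h
    exact Finset.mem_image.mpr ⟨(b, a), h, rfl⟩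

lemma ccCnt_eq_c (A : CoherentConfig Ω) {r v u : Finset (Ω × Ω)}
    (hr : r ∈ A.S) (hv : v ∈ A.S) (hu : u ∈ A.S) {α β : Ω} (h : (α, β) ∈ u) :
    ccCnt r v α β = A.c r v u :=
  A.c_spec r hr v hv u hu (α, β) h

lemma rel_unique (A : CoherentConfig Ω) {u w : Finset (Ω × Ω)}
    (hu : u ∈ A.S) (hw : w ∈ A.S) {x : Ω × Ω} (hxu : x ∈ u) (hxw : x ∈ w) : u = w := by
  obtain ⟨t, -, ht⟩ := A.partition x
  rw [ht u ⟨hu, hxu⟩, ht w ⟨hw, hxw⟩]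

lemma ccCnt_expand (A : CoherentConfig Ω) {r v : Finset (Ω × Ω)}
    (hr : r ∈ A.S) (hv : v ∈ A.S) (α β : Ω) :
    ccCnt r v α β = ∑ w ∈ A.S, if (α, β) ∈ w then A.c r v w else 0 := by
  obtain ⟨u, ⟨huS, hxu⟩, huniq⟩ := A.partition (α, β)
  rw [Finset.sum_eq_single u]
  · rw [if_pos hxu]; exact ccCnt_eq_c A hr hv huS hxu
  · intro w hwS hwne
    rw [if_neg]
    intro hxw
    exact hwne (huniq w ⟨hwS, hxw⟩)
  · intro h; exact absurd huS h

lemma group_sum (A : CoherentConfig Ω) {r v : Finset (Ω × Ω)}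
    (hr : r ∈ A.S) (hv : v ∈ A.S) (α : Ω) :
    ∑ w ∈ A.S, A.c r v w * ccDeg w α = ∑ γ : Ω, if (α, γ) ∈ r then ccDeg v γ else 0 := by
  have h1 : ∑ β : Ω, ccCnt r v α β = ∑ w ∈ A.S, A.c r v w * ccDeg w α := by
    simp_rw [ccCnt_expand A hr hv α]
    rw [Finset.sum_comm]
    refine Finset.sum_congr rfl fun w _ => ?_
    rw [Finset.sum_ite, Finset.sum_const, Finset.sum_const_zero, add_zero, smul_eq_mul,
      mul_comm]
    rfl
  have h2 : ∑ β : Ω, ccCnt r v α β = ∑ γ : Ω, if (α, γ) ∈ r then ccDeg v γ else 0 := by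
    unfold ccCnt
    simp_rw [Finset.card_filter]
    rw [Finset.sum_comm]
    refine Finset.sum_congr rfl fun γ _ => ?_
    by_cases h : (α, γ) ∈ r
    · simp only [h, true_and, if_true]
      rw [ccDeg, Finset.card_filter]
    · simp [h]
  rw [← h1, h2]

theorem stmt11 (p : ℕ) (hp : p.Prime) (A : CoherentConfig Ω)
    (hfib : ∀ Δ : Finset Ω, IsFiber A Δ → WreathFiber p A Δ)
    (hinter : ∀ u ∈ A.S, ∀ Δ Γ : Finset Ω, IsFiber A Δ → IsFiber A Γ → Δ ≠ Γ →
      u ⊆ Δ ×ˢ Γ → HasValency u p)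
    (Δ Γ : Finset Ω) (hΔ : IsFiber A Δ) (hΓ : IsFiber A Γ) (hne : Δ ≠ Γ)
    (s : Finset (Ω × Ω)) (hs : s ∈ A.S) (hsub : s ⊆ Δ ×ˢ Γ) (hreg : Regular A s) :
    adjM s * adjM (star s) = (p : ℂ) • ∑ t ∈ A.S.filter (fun t => IsThinOn A Δ t), adjM t ∧
    cprod A {s} {star s} = A.S.filter (fun t => IsThinOn A Δ t) := by
  classical
  have hppos : 0 < p := hp.pos
  have hp2 : 2 ≤ p := hp.two_le
  unfold Regular at hreg
  have hstar : star s ∈ A.S := A.symm_mem s hs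
  have hstarsub : star s ⊆ Γ ×ˢ Δ := by
    rintro ⟨a, b⟩ hab
    have h := hsub (mem_star_iff.mp hab)
    rw [Finset.mem_product] at h ⊢
    exact ⟨h.2, h.1⟩
  have hvs : HasValency s p := hinter s hs Δ Γ hΔ hΓ hne hsub
  have hvstar : HasValency (star s) p := hinter (star s) hstar Γ Δ hΓ hΔ (Ne.symm hne) hstarsub
  have heS : diagRel Δ ∈ A.S := hΔ
  have hediag : ∀ {a b : Ω}, (a, b) ∈ diagRel Δ ↔ a ∈ Δ ∧ a = b := by
    intro a b
    constructor
    · intro h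
      obtain ⟨d, hd, hdd⟩ := Finset.mem_image.mp h
      obtain ⟨h1, h2⟩ := Prod.mk.injEq .. ▸ hdd
      exact ⟨h1 ▸ hd, h1.symm.trans h2⟩
    · rintro ⟨ha, rfl⟩
      exact Finset.mem_image.mpr ⟨a, ha, rfl⟩
  set T := cprod A {s} {star s} with hT
  have hmemT : ∀ w, w ∈ T ↔ w ∈ A.S ∧ A.c s (star s) w ≠ 0 := by
    intro w; simp [hT, cprod]
  -- the diagonal has degree 1 on Δ
  have hdege : ∀ α ∈ Δ, ccDeg (diagRel Δ) α = 1 := by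
    intro α hα
    rw [ccDeg, show (Finset.univ.filter fun γ : Ω => (α, γ) ∈ diagRel Δ) = {α} by
      ext γ; simp only [Finset.mem_filter, Finset.mem_univ, true_and, Finset.mem_singleton,
        hediag]; constructor
      · rintro ⟨-, rfl⟩; rfl
      · rintro rfl; exact ⟨hα, rfl⟩]
    exact Finset.card_singleton α
  -- every point of Δ has exactly p out-neighbours along s
  obtain ⟨x₀, hx₀⟩ := A.nonempty_mem s hs
  have hx₀Δ : x₀.1 ∈ Δ := (Finset.mem_product.mp (hsub hx₀)).1
  have hcnt_diag : ∀ α : Ω, ccCnt s (star s) α α = ccDeg s α := by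
    intro α
    unfold ccCnt ccDeg
    congr 1
    apply Finset.filter_congr
    intro γ _
    simp [mem_star_iff, and_iff_left_iff_imp]
  have hce : A.c s (star s) (diagRel Δ) = p := by
    have h1 := ccCnt_eq_c A hs hstar heS (hediag.mpr ⟨hx₀Δ, rfl⟩)
    rw [hcnt_diag] at h1
    rw [← h1]
    exact hvs x₀ hx₀
  have hdeg_s : ∀ α ∈ Δ, ccDeg s α = p := by
    intro α hα
    have h1 := ccCnt_eq_c A hs hstar heS (hediag.mpr ⟨hα, rfl⟩)
    rw [hcnt_diag] at h1
    rw [h1, hce]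
  -- the master counting identity
  have hmaster : ∀ α ∈ Δ, ∑ w ∈ A.S, A.c s (star s) w * ccDeg w α = p * p := by
    intro α hα
    rw [group_sum A hs hstar α]
    have hcongr : ∀ γ : Ω, (if (α, γ) ∈ s then ccDeg (star s) γ else 0)
        = if (α, γ) ∈ s then p else 0 := by
      intro γ
      split_ifs with h
      · exact hvstar (γ, α) (mem_star_iff.mpr h)
      · rfl
    simp_rw [hcongr]
    rw [Finset.sum_ite, Finset.sum_const, Finset.sum_const_zero, add_zero, smul_eq_mul]
    rw [show (Finset.univ.filter fun γ : Ω => (α, γ) ∈ s).card = ccDeg s α from rfl,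
      hdeg_s α hα]
  -- intersection numbers with s, s* are bounded by p
  have hcle : ∀ w ∈ A.S, A.c s (star s) w ≠ 0 → A.c s (star s) w ≤ p := by
    intro w hw hc0
    obtain ⟨⟨a, b⟩, hab⟩ := A.nonempty_mem w hw
    have hcnt := ccCnt_eq_c A hs hstar hw hab
    have hle : ccCnt s (star s) a b ≤ ccDeg s a := by
      apply Finset.card_le_card
      intro γ hγ
      simp only [Finset.mem_filter, Finset.mem_univ, true_and] at hγ ⊢
      exact hγ.1
    rw [hcnt] at hle
    have haΔ : a ∈ Δ := by
      rw [← hcnt] at hc0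
      obtain ⟨γ, hγ⟩ := Finset.card_ne_zero.mp hc0
      simp only [Finset.mem_filter, Finset.mem_univ, true_and] at hγ
      exact (Finset.mem_product.mp (hsub hγ.1)).1
    rw [hdeg_s a haΔ] at hle
    exact hle
  -- Step A: every relation in s s* is thin on Δ
  have hthin : ∀ u ∈ T, IsThinOn A Δ u := by
    intro u huT
    obtain ⟨huS, hcu⟩ := (hmemT u).mp huT
    have husub : u ⊆ Δ ×ˢ Δ := by
      rintro ⟨a, b⟩ hab
      have hcnt := ccCnt_eq_c A hs hstar huS hab
      rw [← hcnt] at hcu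
      obtain ⟨γ, hγ⟩ := Finset.card_ne_zero.mp hcu
      simp only [Finset.mem_filter, Finset.mem_univ, true_and] at hγ
      rw [Finset.mem_product]
      exact ⟨(Finset.mem_product.mp (hsub hγ.1)).1,
        (Finset.mem_product.mp (hsub (mem_star_iff.mp hγ.2))).1⟩
    rcases (hfib Δ hΔ).2.2.2.1 u huS husub with h1 | hpv
    · exact ⟨huS, husub, h1⟩
    exfalso
    obtain ⟨⟨α, β₀⟩, hαβ⟩ := A.nonempty_mem u huS
    have hαΔ : α ∈ Δ := (Finset.mem_product.mp (husub hαβ)).1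
    have hdegu : ccDeg u α = p := hpv (α, β₀) hαβ
    -- regularity forces c u s s = p
    have hreg' : ∀ w ∈ A.S, w ≠ s → A.c u s w = 0 := by
      intro w hwS hwne
      by_contra hc
      have hwmem : w ∈ cprod A T {s} := by
        rw [cprod, Finset.mem_filter]
        exact ⟨hwS, u, huT, s, Finset.mem_singleton_self s, hc⟩
      rw [hreg] at hwmem
      exact hwne (Finset.mem_singleton.mp hwmem)
    have hcuss : A.c u s s = p := by
      have hgs := group_sum A huS hs α
      have hlhs : ∑ w ∈ A.S, A.c u s w * ccDeg w α = A.c u s s * ccDeg s α := by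
        rw [Finset.sum_eq_single s]
        · intro w hwS hwne
          rw [hreg' w hwS hwne, zero_mul]
        · intro h; exact absurd hs h
      have hrhs : ∑ γ : Ω, (if (α, γ) ∈ u then ccDeg s γ else 0) = p * p := by
        have hcongr : ∀ γ : Ω, (if (α, γ) ∈ u then ccDeg s γ else 0)
            = if (α, γ) ∈ u then p else 0 := by
          intro γ
          split_ifs with h
          · exact hdeg_s γ (Finset.mem_product.mp (husub h)).2
          · rfl
        simp_rw [hcongr]
        rw [Finset.sum_ite, Finset.sum_const, Finset.sum_const_zero, add_zero, smul_eq_mul,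
          show (Finset.univ.filter fun γ : Ω => (α, γ) ∈ u).card = ccDeg u α from rfl, hdegu]
      rw [hlhs, hdeg_s α hαΔ, hrhs] at hgs
      exact Nat.eq_of_mul_eq_mul_right hppos hgs
    -- hence α s ⊆ β₀ s
    have hsub2 : ∀ δ : Ω, (α, δ) ∈ s → (β₀, δ) ∈ s := by
      intro δ hδ
      have h1 : ccCnt u s α δ = A.c u s s := ccCnt_eq_c A huS hs hs hδ
      have hsubf : (Finset.univ.filter fun β : Ω => (α, β) ∈ u ∧ (β, δ) ∈ s)
          ⊆ Finset.univ.filter fun β : Ω => (α, β) ∈ u := by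
        intro β hβ
        simp only [Finset.mem_filter, Finset.mem_univ, true_and] at hβ ⊢
        exact hβ.1
      have heq : (Finset.univ.filter fun β : Ω => (α, β) ∈ u)
          = Finset.univ.filter fun β : Ω => (α, β) ∈ u ∧ (β, δ) ∈ s := by
        refine (Finset.eq_of_subset_of_card_le hsubf ?_).symm
        rw [show (Finset.univ.filter fun β : Ω => (α, β) ∈ u).card = ccDeg u α from rfl,
          hdegu, show (Finset.univ.filter fun β : Ω => (α, β) ∈ u ∧ (β, δ) ∈ s).card
            = ccCnt u s α δ from rfl, h1, hcuss]
      have hβ₀ : β₀ ∈ Finset.univ.filter fun β : Ω => (α, β) ∈ u := by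
        simp [hαβ]
      rw [heq] at hβ₀
      simp only [Finset.mem_filter, Finset.mem_univ, true_and] at hβ₀
      exact hβ₀.2
    -- hence c s s* u = p
    have hcu_p : A.c s (star s) u = p := by
      have h1 : ccCnt s (star s) α β₀ = A.c s (star s) u := ccCnt_eq_c A hs hstar huS hαβ
      rw [← h1, ccCnt, show (Finset.univ.filter fun γ : Ω => (α, γ) ∈ s ∧ (γ, β₀) ∈ star s)
          = Finset.univ.filter fun γ : Ω => (α, γ) ∈ s by
        apply Finset.filter_congr
        intro γ _
        simp only [and_iff_left_iff_imp]
        intro h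
        exact mem_star_iff.mpr (hsub2 γ h)]
      exact hdeg_s α hαΔ
    -- contradiction with the master identity
    have he_ne_u : diagRel Δ ≠ u := by
      intro h
      have h1 : ccDeg u x₀.1 = p := hpv (x₀.1, x₀.1) (h ▸ hediag.mpr ⟨hx₀Δ, rfl⟩)
      rw [← h, hdege x₀.1 hx₀Δ] at h1
      omega
    have hpairsub : ({diagRel Δ, u} : Finset (Finset (Ω × Ω))) ⊆ A.S := by
      intro w hw
      rcases Finset.mem_insert.mp hw with rfl | hw
      · exact heS
      · exact Finset.mem_singleton.mp hw ▸ huS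
    have hsum_le : ∑ w ∈ ({diagRel Δ, u} : Finset (Finset (Ω × Ω))),
        A.c s (star s) w * ccDeg w α ≤ ∑ w ∈ A.S, A.c s (star s) w * ccDeg w α :=
      Finset.sum_le_sum_of_subset hpairsub
    rw [Finset.sum_pair he_ne_u, hce, hdege α hαΔ, hcu_p, hdegu, hmaster α hαΔ] at hsum_le
    have : p * 1 + p * p ≤ 0 + p * p := by rwa [zero_add]
    have := Nat.le_of_add_le_add_right this
    omega
  -- Step B: T equals the set of thin relations and all structure constants are p
  set O := A.S.filter (fun t => IsThinOn A Δ t) with hO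
  have hOcard : O.card = p := (hfib Δ hΔ).2.2.1
  have hTsub : T ⊆ O := by
    intro u huT
    rw [hO, Finset.mem_filter]
    exact ⟨((hmemT u).mp huT).1, hthin u huT⟩
  have hdegthin : ∀ w ∈ T, ∀ α : Ω, ccDeg w α ≤ 1 := by
    intro w hwT α
    by_cases hex : ∃ γ, (α, γ) ∈ w
    · obtain ⟨γ, hγ⟩ := hex
      exact le_of_eq ((hthin w hwT).2.2 (α, γ) hγ)
    · push_neg at hex
      rw [ccDeg, Finset.card_eq_zero.mpr]
      · omega
      · rw [Finset.filter_eq_empty_iff]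
        intro γ _
        exact hex γ
  have hTS : T ⊆ A.S := fun w hw => ((hmemT w).mp hw).1
  have hsumT : ∑ w ∈ A.S, A.c s (star s) w * ccDeg w x₀.1
      = ∑ w ∈ T, A.c s (star s) w * ccDeg w x₀.1 := by
    refine (Finset.sum_subset hTS ?_).symm
    intro w hwS hwT
    have : A.c s (star s) w = 0 := by
      by_contra hc
      exact hwT ((hmemT w).mpr ⟨hwS, hc⟩)
    rw [this, zero_mul]
  have h3 : p * p ≤ ∑ w ∈ T, A.c s (star s) w := by
    have := hmaster x₀.1 hx₀Δ
    rw [hsumT] at this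
    rw [← this]
    refine Finset.sum_le_sum fun w hw => ?_
    calc A.c s (star s) w * ccDeg w x₀.1 ≤ A.c s (star s) w * 1 :=
          Nat.mul_le_mul_left _ (hdegthin w hw x₀.1)
      _ = A.c s (star s) w := mul_one _
  have h4 : ∑ w ∈ T, A.c s (star s) w ≤ T.card * p := by
    rw [← smul_eq_mul, ← Finset.sum_const]
    refine Finset.sum_le_sum fun w hw => ?_
    exact hcle w (hTS hw) ((hmemT w).mp hw).2
  have hTcard_ge : p ≤ T.card := by
    have : p * p ≤ T.card * p := le_trans h3 h4
    exact Nat.le_of_mul_le_mul_right this hppos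
  have hTO : T = O := by
    refine Finset.eq_of_subset_of_card_le hTsub ?_
    rw [hOcard]
    exact hTcard_ge
  have hTcard : T.card = p := by rw [hTO, hOcard]
  have hceach : ∀ w ∈ T, A.c s (star s) w = p := by
    by_contra hcon
    push_neg at hcon
    obtain ⟨w₀, hw₀T, hw₀ne⟩ := hcon
    have hlt : A.c s (star s) w₀ < p :=
      lt_of_le_of_ne (hcle w₀ (hTS hw₀T) ((hmemT w₀).mp hw₀T).2) hw₀ne
    have : ∑ w ∈ T, A.c s (star s) w < ∑ w ∈ T, p :=
      Finset.sum_lt_sum (fun w hw => hcle w (hTS hw) ((hmemT w).mp hw).2) ⟨w₀, hw₀T, hlt⟩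
    rw [Finset.sum_const, smul_eq_mul, hTcard] at this
    omega
  refine ⟨?_, hTO⟩
  -- the matrix identity
  ext α β
  rw [Matrix.mul_apply, Matrix.smul_apply, Matrix.sum_apply]
  have hL : ∑ γ : Ω, adjM s α γ * adjM (star s) γ β = (ccCnt s (star s) α β : ℂ) := by
    rw [ccCnt, Finset.card_filter, Nat.cast_sum]
    refine Finset.sum_congr rfl fun γ _ => ?_
    unfold adjM
    by_cases h1 : (α, γ) ∈ s <;> by_cases h2 : (γ, β) ∈ star s <;> simp [h1, h2]
  rw [hL]
  by_cases hex : ∃ t, t ∈ O ∧ (α, β) ∈ t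
  · obtain ⟨t₀, ht₀O, hαβ⟩ := hex
    have ht₀S : t₀ ∈ A.S := (Finset.mem_filter.mp ht₀O).1
    have hcval : ccCnt s (star s) α β = p := by
      rw [ccCnt_eq_c A hs hstar ht₀S hαβ]
      exact hceach t₀ (hTO ▸ ht₀O)
    rw [hcval]
    have hone : ∑ t ∈ O, adjM t α β = 1 := by
      rw [Finset.sum_eq_single t₀]
      · simp [adjM, hαβ]
      · intro t htO htne
        have htS : t ∈ A.S := (Finset.mem_filter.mp htO).1
        rw [adjM, if_neg]
        intro h
        exact htne (rel_unique A htS ht₀S h hαβ)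
      · intro h; exact absurd ht₀O h
    rw [hone, smul_eq_mul, mul_one]
  · have h0 : ccCnt s (star s) α β = 0 := by
      by_contra h0
      obtain ⟨w, ⟨hwS, hw⟩, -⟩ := A.partition (α, β)
      have hcne : A.c s (star s) w ≠ 0 := by
        rw [← ccCnt_eq_c A hs hstar hwS hw]
        exact h0
      exact hex ⟨w, hTO ▸ (hmemT w).mpr ⟨hwS, hcne⟩, hw⟩
    rw [h0]
    have hzero : ∑ t ∈ O, adjM t α β = 0 := by
      refine Finset.sum_eq_zero fun t ht => ?_
      rw [adjM, if_neg]
      intro h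
      exact hex ⟨t, ht, h⟩
    rw [hzero, smul_eq_mul, mul_zero, Nat.cast_zero]
end

section
/- Under the same setup, let s ∈ S_{ij} (i ≠ j) be non-regular with valency p. Then σ_s σ_{s*} = p·σ_{1_{Ω_i}} + Σ_{u ∈ S_i \ O_θ(S_i)} σ_u. In particular the complex product ss* equals {1_{Ω_i}} ∪ (S_i \ O_θ(S_i)). -/
open Finset
open scoped Classical

variable {Ω : Type} [Fintype Ω] [DecidableEq Ω]

/-!
The thin relations of the fiber `Δ` form a cyclic group `T` of order `p`, realised as
permutations acting freely on `Δ`, with `p` orbits of size `p`. If a nontrivial `t ∈ T` occurred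
in `s s*`, then `t s = s`, hence `T s = s` because `t` generates `T`, and `s` would be regular. So
the `p` in-neighbours along `s` of any point lie in distinct `T`-orbits and form a transversal of
them. On the other side `T` acts on the `p - 1` non-thin relations of `Δ` by `u ↦ u t`; a
`p`-group fixes every point of a set of fewer than `p` points, so each non-thin `u` satisfies
`u T = u`, and `u(α)` is one `T`-orbit. A transversal meets it exactly once, i.e.
`c(u, s, s) = 1`, and double counting gives `c(s, s*, u) = 1`. Finally `c(s, s*, 1_Δ) = p` and
no relation outside `Δ × Δ` occurs in `s s*`.
-/

set_option linter.unusedSectionVars false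

theorem Finset.apply_eq_self_of_iterate_prime {X : Type*} {f : X → X} {T : Finset X} {p : ℕ}
    (hp : p.Prime) (hT : ∀ x ∈ T, f x ∈ T) (hper : ∀ x ∈ T, f^[p] x = x) (hcard : #T < p)
    {x : X} (hx : x ∈ T) : f x = x := by
  have := Fact.mk hp
  by_contra hfx
  have hmin : Function.minimalPeriod f x = p := Function.minimalPeriod_eq_prime (hper x hx) hfx
  have hmaps : Set.MapsTo f T T := hT
  have hle : #(range p) ≤ #T := by
    refine card_le_card_of_injOn (f^[·] x) (fun k _ => hmaps.iterate k hx) ?_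
    simpa [hmin] using Function.iterate_injOn_Iio_minimalPeriod (f := f) (x := x)
  rw [card_range] at hle
  omega

variable {A : CoherentConfig Ω} {r s t u v w : Finset (Ω × Ω)} {Δ Γ : Finset Ω} {α β γ : Ω}
  {m n p : ℕ} {g h : Equiv.Perm Ω}

theorem mem_star : (α, β) ∈ star u ↔ (β, α) ∈ u := by
  simp [_root_.star]

theorem star_subset_product (hsub : u ⊆ Δ ×ˢ Γ) : star u ⊆ Γ ×ˢ Δ := fun ⟨_, _⟩ h => by
  simpa [and_comm] using hsub (mem_star.mp h)

theorem mem_diagRel : (α, β) ∈ diagRel Δ ↔ α ∈ Δ ∧ β = α := by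
  simp [diagRel, and_comm, eq_comm]

theorem mem_diagRel_self (hα : α ∈ Δ) : (α, α) ∈ diagRel Δ :=
  mem_diagRel.mpr ⟨hα, rfl⟩

def nbhd (u : Finset (Ω × Ω)) (α : Ω) : Finset Ω :=
  univ.filter fun β => (α, β) ∈ u

@[simp]

theorem mem_nbhd : β ∈ nbhd u α ↔ (α, β) ∈ u := by
  simp [nbhd]

theorem HasValency.card_nbhd (hv : HasValency u n) (hx : (α, β) ∈ u) : #(nbhd u α) = n :=
  hv _ hx

theorem HasValency.eq_of_mem (hv : HasValency u 1) (h : (α, β) ∈ u) (h' : (α, γ) ∈ u) :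
    β = γ :=
  Finset.card_le_one.mp (hv.card_nbhd h).le _ (mem_nbhd.mpr h) _ (mem_nbhd.mpr h')

theorem HasValency.unique (hn : HasValency u n) (hm : HasValency u m) (hu : u.Nonempty) :
    n = m := by
  obtain ⟨x, hx⟩ := hu
  exact (hn x hx).symm.trans (hm x hx)

theorem IsFiber.nonempty (hΔ : IsFiber A Δ) : Δ.Nonempty := by
  obtain ⟨⟨a, b⟩, hab⟩ := A.nonempty_mem _ hΔ
  exact ⟨a, (mem_diagRel.mp hab).1⟩

namespace CoherentConfig

theorem exists_mem (A : CoherentConfig Ω) (x : Ω × Ω) : ∃ u ∈ A.S, x ∈ u :=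
  let ⟨u, hu, _⟩ := A.partition x
  ⟨u, hu⟩

theorem eq_of_mem_of_mem {x : Ω × Ω} (hu : u ∈ A.S) (hv : v ∈ A.S) (hxu : x ∈ u)
    (hxv : x ∈ v) : u = v :=
  (A.partition x).unique ⟨hu, hxu⟩ ⟨hv, hxv⟩

theorem star_mem (hu : u ∈ A.S) : star u ∈ A.S :=
  A.symm_mem u hu

theorem c_ne_zero_iff (hr : r ∈ A.S) (hs : s ∈ A.S) (hu : u ∈ A.S) (hx : (α, β) ∈ u) :
    A.c r s u ≠ 0 ↔ ∃ γ, (α, γ) ∈ r ∧ (γ, β) ∈ s := by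
  rw [← A.c_spec r hr s hs u hu _ hx, Finset.card_ne_zero]
  simp [Finset.Nonempty]

theorem subset_product_of_mem (hΔ : IsFiber A Δ) (hΓ : IsFiber A Γ) (hu : u ∈ A.S)
    (hx : (α, β) ∈ u) (hα : α ∈ Δ) (hβ : β ∈ Γ) : u ⊆ Δ ×ˢ Γ := by
  rintro ⟨a, b⟩ hab
  have hl : A.c (diagRel Δ) u u ≠ 0 :=
    (c_ne_zero_iff hΔ hu hu hx).mpr ⟨α, mem_diagRel_self hα, hx⟩
  have hr : A.c u (diagRel Γ) u ≠ 0 :=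
    (c_ne_zero_iff hu hΓ hu hx).mpr ⟨β, hx, mem_diagRel_self hβ⟩
  obtain ⟨_, ha, -⟩ := (c_ne_zero_iff hΔ hu hu hab).mp hl
  obtain ⟨_, -, hb⟩ := (c_ne_zero_iff hu hΓ hu hab).mp hr
  exact mem_product.mpr ⟨(mem_diagRel.mp ha).1, (mem_diagRel.mp hb).2 ▸ (mem_diagRel.mp hb).1⟩

theorem exists_mem_of_subset_product (hΔ : IsFiber A Δ) (hu : u ∈ A.S) (hsub : u ⊆ Δ ×ˢ Γ)
    (hα : α ∈ Δ) : ∃ β, (α, β) ∈ u := by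
  obtain ⟨⟨a, b⟩, hab⟩ := A.nonempty_mem u hu
  have hc : A.c u (star u) (diagRel Δ) ≠ 0 :=
    (c_ne_zero_iff hu (star_mem hu) hΔ (mem_diagRel_self (mem_product.mp (hsub hab)).1)).mpr
      ⟨b, hab, mem_star.mpr hab⟩
  obtain ⟨β, hβ, -⟩ := (c_ne_zero_iff hu (star_mem hu) hΔ (mem_diagRel_self hα)).mp hc
  exact ⟨β, hβ⟩

theorem card_biUnion_nbhd {R : Finset (Finset (Ω × Ω))} (hR : R ⊆ A.S) (α : Ω) :
    #(R.biUnion (nbhd · α)) = ∑ u ∈ R, #(nbhd u α) := by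
  refine card_biUnion fun u hu v hv hne => disjoint_left.mpr fun β hβu hβv => hne ?_
  exact eq_of_mem_of_mem (hR hu) (hR hv) (mem_nbhd.mp hβu) (mem_nbhd.mp hβv)

/-- Both sides count the pairs `(β, γ)` with `(α, β) ∈ u`, `(α, γ) ∈ s` and `(β, γ) ∈ v`. -/
theorem card_nbhd_mul_c (hu : u ∈ A.S) (hs : s ∈ A.S) (hv : v ∈ A.S) :
    #(nbhd u α) * A.c s (star v) u = #(nbhd s α) * A.c u v s := by
  have key := sum_card_bipartiteAbove_eq_sum_card_bipartiteBelow (fun β γ => (β, γ) ∈ v)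
    (s := nbhd u α) (t := nbhd s α)
  rwa [sum_const_nat (m := A.c s (star v) u), sum_const_nat (m := A.c u v s)] at key
  · intro γ hγ
    rw [← A.c_spec u hu v hv s hs (α, γ) (mem_nbhd.mp hγ)]
    congr 1
    ext
    simp [bipartiteBelow]
  · intro β hβ
    rw [← A.c_spec s hs (star v) (star_mem hv) u hu (α, β) (mem_nbhd.mp hβ)]
    congr 1
    ext
    simp [bipartiteAbove, mem_star]

theorem adjM_mul_adjM (hr : r ∈ A.S) (hs : s ∈ A.S) :
    adjM r * adjM s = ∑ u ∈ A.S, (A.c r s u : ℂ) • adjM u := by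
  ext α β
  obtain ⟨w, hw, hx⟩ := A.exists_mem (α, β)
  rw [Matrix.mul_apply, Matrix.sum_apply, Finset.sum_eq_single w]
  · rw [← A.c_spec r hr s hs w hw _ hx, Finset.card_filter]
    simp [adjM, hx, ← ite_and, and_comm]
  · intro u hu hne
    simp [adjM, show (α, β) ∉ u from fun h => hne (eq_of_mem_of_mem hu hw h hx)]
  · exact fun h => absurd hw h

end CoherentConfig

open CoherentConfig Equiv

def ThinClosed (A : CoherentConfig Ω) (Δ : Finset Ω) : Prop :=
  ∀ s t u : Finset (Ω × Ω), IsThinOn A Δ s → IsThinOn A Δ t → u ∈ A.S →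
    A.c s (star t) u ≠ 0 → IsThinOn A Δ u

theorem isThinOn_diagRel (hΔ : IsFiber A Δ) : IsThinOn A Δ (diagRel Δ) := by
  refine ⟨hΔ, fun ⟨a, b⟩ hx => ?_, fun ⟨a, b⟩ hx => ?_⟩
  · obtain ⟨ha, rfl⟩ := mem_diagRel.mp hx
    exact mem_product.mpr ⟨ha, ha⟩
  · obtain ⟨ha, rfl⟩ := mem_diagRel.mp hx
    rw [← card_singleton b]
    congr 1
    ext
    simp [mem_diagRel, ha, eq_comm]

theorem ThinClosed.isThinOn_star (hcl : ThinClosed A Δ) (hΔ : IsFiber A Δ)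
    (ht : IsThinOn A Δ t) : IsThinOn A Δ (star t) := by
  obtain ⟨⟨a, b⟩, hab⟩ := A.nonempty_mem t ht.1
  have ha : (b, a) ∈ star t := mem_star.mpr hab
  refine hcl _ t _ (isThinOn_diagRel hΔ) ht (star_mem ht.1) ?_
  exact (c_ne_zero_iff hΔ (star_mem ht.1) (star_mem ht.1) ha).mpr
    ⟨b, mem_diagRel_self (mem_product.mp (ht.2.1 hab)).2, ha⟩

theorem ThinClosed.exists_comp {t' : Finset (Ω × Ω)} (hcl : ThinClosed A Δ) (hΔ : IsFiber A Δ)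
    (ht : IsThinOn A Δ t) (ht' : IsThinOn A Δ t') :
    ∃ u, IsThinOn A Δ u ∧ ∀ α β γ, (α, β) ∈ t → (β, γ) ∈ t' → (α, γ) ∈ u := by
  have ht'' : IsThinOn A Δ (star t') := hcl.isThinOn_star hΔ ht'
  have hc : ∀ {u α γ}, u ∈ A.S → (α, γ) ∈ u →
      (A.c t (star (star t')) u ≠ 0 ↔ ∃ β, (α, β) ∈ t ∧ (β, γ) ∈ t') := fun hu hx => by
    simp only [c_ne_zero_iff ht.1 (star_mem ht''.1) hu hx, mem_star]
  obtain ⟨α₀, hα₀⟩ := hΔ.nonempty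
  obtain ⟨β₀, hβ₀⟩ := exists_mem_of_subset_product hΔ ht.1 ht.2.1 hα₀
  obtain ⟨γ₀, hγ₀⟩ :=
    exists_mem_of_subset_product hΔ ht'.1 ht'.2.1 (mem_product.mp (ht.2.1 hβ₀)).2
  obtain ⟨u, hu, hx₀⟩ := A.exists_mem (α₀, γ₀)
  have hcu : A.c t (star (star t')) u ≠ 0 := (hc hu hx₀).mpr ⟨β₀, hβ₀, hγ₀⟩
  have hthin : IsThinOn A Δ u := hcl t (star t') u ht ht'' hu hcu
  refine ⟨u, hthin, fun α β γ h₁ h₂ => ?_⟩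
  obtain ⟨δ, hδ⟩ :=
    exists_mem_of_subset_product hΔ hu hthin.2.1 (mem_product.mp (ht.2.1 h₁)).1
  obtain ⟨β', h₁', h₂'⟩ := (hc hu hδ).mp hcu
  obtain rfl := ht.2.2.eq_of_mem h₁ h₁'
  rwa [ht'.2.2.eq_of_mem h₂ h₂']

section Shifts

/-- The thin radical `O_θ(S_Δ)`, realised as a group of permutations of `Ω`. -/
def thinShifts (hΔ : IsFiber A Δ) (hcl : ThinClosed A Δ) : Subgroup (Perm Ω) where
  carrier := {g | (∃ t, IsThinOn A Δ t ∧ ∀ α ∈ Δ, (α, g α) ∈ t) ∧ ∀ α ∉ Δ, g α = α}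
  one_mem' := ⟨⟨diagRel Δ, isThinOn_diagRel hΔ, fun _ hα => mem_diagRel_self hα⟩, fun _ _ => rfl⟩
  mul_mem' := by
    rintro g h ⟨⟨t, ht, hgt⟩, hg⟩ ⟨⟨t', ht', hht'⟩, hh⟩
    obtain ⟨u, hu, hcomp⟩ := hcl.exists_comp hΔ ht' ht
    refine ⟨⟨u, hu, fun α hα => hcomp _ _ _ (hht' α hα) (hgt _ ?_)⟩, fun α hα => ?_⟩
    · exact (mem_product.mp (ht'.2.1 (hht' α hα))).2
    · simp [hh α hα, hg α hα]
  inv_mem' := by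
    rintro g ⟨⟨t, ht, hgt⟩, hg⟩
    have hmaps : ∀ α ∈ Δ, g⁻¹ α ∈ Δ := fun α hα => by
      by_contra hα'
      exact hα' (by rwa [← hg _ hα', ← Perm.mul_apply, mul_inv_cancel, Perm.one_apply])
    refine ⟨⟨star t, hcl.isThinOn_star hΔ ht, fun α hα => mem_star.mpr ?_⟩, fun α hα => ?_⟩
    · simpa using hgt _ (hmaps α hα)
    · rw [Perm.inv_eq_iff_eq, hg α hα]

variable {hΔ : IsFiber A Δ} {hcl : ThinClosed A Δ}

theorem exists_mem_thinShifts (ht : IsThinOn A Δ t) :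
    ∃ g ∈ thinShifts hΔ hcl, ∀ α ∈ Δ, (α, g α) ∈ t := by
  have hrow : ∀ α ∈ Δ, ∃ β, (α, β) ∈ t := fun α hα =>
    exists_mem_of_subset_product hΔ ht.1 ht.2.1 hα
  choose! φ hφ using hrow
  have hφΔ : ∀ α ∈ Δ, φ α ∈ Δ := fun α hα => (mem_product.mp (ht.2.1 (hφ α hα))).2
  let f : Ω → Ω := fun α => if α ∈ Δ then φ α else α
  have hf : Function.Injective f := by
    intro a b hab
    by_cases ha : a ∈ Δ <;> by_cases hb : b ∈ Δ <;>
      simp only [f, ha, hb, if_true, if_false] at hab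
    · exact (hcl.isThinOn_star hΔ ht).2.2.eq_of_mem (mem_star.mpr (hφ a ha))
        (mem_star.mpr (hab ▸ hφ b hb))
    · exact absurd (hab ▸ hφΔ a ha) hb
    · exact absurd (hab ▸ hφΔ b hb) ha
    · exact hab
  have hfΔ : ∀ α ∈ Δ, (α, f α) ∈ t := fun α hα => by simp [f, hα, hφ α hα]
  refine ⟨Equiv.ofBijective f (Finite.injective_iff_bijective.mp hf), ⟨⟨t, ht, ?_⟩, ?_⟩, ?_⟩
  · simpa using hfΔ
  · intro α hα
    simp [f, hα]
  · simpa using hfΔ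

theorem apply_mem_of_mem_thinShifts (hg : g ∈ thinShifts hΔ hcl) (hα : α ∈ Δ) : g α ∈ Δ := by
  obtain ⟨⟨t, ht, hgt⟩, -⟩ := hg
  exact (mem_product.mp (ht.2.1 (hgt α hα))).2

theorem eq_one_of_mem_thinShifts (hg : g ∈ thinShifts hΔ hcl) (hα : α ∈ Δ) (hfix : g α = α) :
    g = 1 := by
  obtain ⟨⟨t, ht, hgt⟩, hg⟩ := hg
  have htd : t = diagRel Δ :=
    eq_of_mem_of_mem ht.1 hΔ (by simpa [hfix] using hgt α hα) (mem_diagRel_self hα)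
  ext β
  by_cases hβ : β ∈ Δ
  · have := hgt β hβ
    rw [htd, mem_diagRel] at this
    exact this.2
  · exact hg β hβ

noncomputable def shiftOrbit (P : Subgroup (Perm Ω)) (β : Ω) : Finset Ω :=
  (univ.filter (· ∈ P)).image fun g => g β

theorem mem_shiftOrbit {P : Subgroup (Perm Ω)} {β' : Ω} :
    β' ∈ shiftOrbit P β ↔ ∃ g ∈ P, g β = β' := by
  simp [shiftOrbit]

theorem mem_shiftOrbit_comm {P : Subgroup (Perm Ω)} :
    β ∈ shiftOrbit P α ↔ α ∈ shiftOrbit P β := by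
  suffices ∀ {α β}, β ∈ shiftOrbit P α → α ∈ shiftOrbit P β from ⟨this, this⟩
  intro α β h
  obtain ⟨g, hg, rfl⟩ := mem_shiftOrbit.mp h
  exact mem_shiftOrbit.mpr ⟨g⁻¹, inv_mem hg, by simp⟩

theorem mem_shiftOrbit_trans {P : Subgroup (Perm Ω)} (hβ : β ∈ shiftOrbit P α)
    (hγ : γ ∈ shiftOrbit P β) : γ ∈ shiftOrbit P α := by
  obtain ⟨g, hg, rfl⟩ := mem_shiftOrbit.mp hβ
  obtain ⟨h, hh, rfl⟩ := mem_shiftOrbit.mp hγ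
  exact mem_shiftOrbit.mpr ⟨h * g, mul_mem hh hg, rfl⟩

theorem card_shiftOrbit (hβ : β ∈ Δ) :
    #(shiftOrbit (thinShifts hΔ hcl) β) = Nat.card (thinShifts hΔ hcl) := by
  rw [shiftOrbit, card_image_of_injOn, Nat.card_eq_fintype_card, Fintype.card_subtype]
  intro g hg h hh hgh
  replace hg : g ∈ thinShifts hΔ hcl := by simpa using hg
  replace hh : h ∈ thinShifts hΔ hcl := by simpa using hh
  have : h⁻¹ * g = 1 :=
    eq_one_of_mem_thinShifts (mul_mem (inv_mem hh) hg) hβ (by simp [Perm.mul_apply, hgh])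
  exact (inv_mul_eq_one.mp this).symm

theorem shiftOrbit_eq_biUnion (hα : α ∈ Δ) :
    shiftOrbit (thinShifts hΔ hcl) α = (A.S.filter (IsThinOn A Δ)).biUnion (nbhd · α) := by
  ext β
  simp only [mem_shiftOrbit, mem_biUnion, mem_filter, mem_nbhd]
  constructor
  · rintro ⟨g, ⟨⟨t, ht, hgt⟩, -⟩, rfl⟩
    exact ⟨t, ⟨ht.1, ht⟩, hgt α hα⟩
  · rintro ⟨t, ⟨-, ht⟩, hβ⟩
    obtain ⟨g, hg, hgt⟩ := exists_mem_thinShifts (hΔ := hΔ) (hcl := hcl) ht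
    exact ⟨g, hg, ht.2.2.eq_of_mem (hgt α hα) hβ⟩

end Shifts

theorem WreathFiber.isFiber (hW : WreathFiber p A Δ) : IsFiber A Δ := hW.1

theorem WreathFiber.card (hW : WreathFiber p A Δ) : #Δ = p ^ 2 := hW.2.1

theorem WreathFiber.card_thin (hW : WreathFiber p A Δ) : #(A.S.filter (IsThinOn A Δ)) = p :=
  hW.2.2.1

theorem WreathFiber.valency (hW : WreathFiber p A Δ) (hu : u ∈ A.S) (hsub : u ⊆ Δ ×ˢ Δ) :
    HasValency u 1 ∨ HasValency u p :=
  hW.2.2.2.1 u hu hsub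

theorem WreathFiber.thinClosed (hW : WreathFiber p A Δ) : ThinClosed A Δ := hW.2.2.2.2

abbrev WreathFiber.shifts (hW : WreathFiber p A Δ) : Subgroup (Perm Ω) :=
  thinShifts hW.isFiber hW.thinClosed

theorem WreathFiber.card_shifts (hW : WreathFiber p A Δ) : Nat.card hW.shifts = p := by
  obtain ⟨α, hα⟩ := hW.isFiber.nonempty
  rw [← card_shiftOrbit hα, shiftOrbit_eq_biUnion hα, card_biUnion_nbhd (filter_subset _ _),
    sum_const_nat (m := 1), hW.card_thin, mul_one]
  intro t ht
  have ht := (mem_filter.mp ht).2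
  obtain ⟨β, hβ⟩ := exists_mem_of_subset_product hW.isFiber ht.1 ht.2.1 hα
  exact ht.2.2.card_nbhd hβ

theorem WreathFiber.pow_eq_one (hW : WreathFiber p A Δ) (hg : g ∈ hW.shifts) : g ^ p = 1 := by
  have := pow_card_eq_one' (x := (⟨g, hg⟩ : hW.shifts))
  rw [hW.card_shifts] at this
  simpa using congrArg Subtype.val this

theorem WreathFiber.exists_pow_eq (hp : p.Prime) (hW : WreathFiber p A Δ) (hg : g ∈ hW.shifts)
    (hg1 : g ≠ 1) (hh : h ∈ hW.shifts) : ∃ n : ℕ, g ^ n = h := by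
  have := Fact.mk hp
  obtain ⟨n, hn⟩ := Submonoid.mem_powers_iff _ _ |>.mp <|
    mem_powers_of_prime_card hW.card_shifts (g := ⟨g, hg⟩) (g' := ⟨h, hh⟩)
      (by simpa [Subtype.ext_iff] using hg1)
  exact ⟨n, by simpa using congrArg Subtype.val hn⟩

section ShiftRel

variable {hΔ : IsFiber A Δ} {hcl : ThinClosed A Δ} {a b : Ω}

/-- For `g` in the thin radical this is the complex product `u t_g` with the thin relation
`t_g` of `g`. -/
def shiftRel (g : Perm Ω) (u : Finset (Ω × Ω)) : Finset (Ω × Ω) :=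
  u.image (Prod.map id g)

theorem mem_shiftRel : (α, β) ∈ shiftRel g u ↔ (α, g⁻¹ β) ∈ u := by
  simp only [shiftRel, mem_image, Prod.exists, Prod.map_apply, id_eq, Prod.mk.injEq]
  constructor
  · rintro ⟨a, b, hab, rfl, rfl⟩
    simpa using hab
  · exact fun h => ⟨α, g⁻¹ β, h, rfl, by simp⟩

theorem shiftRel_mul : shiftRel g (shiftRel h u) = shiftRel (g * h) u := by
  ext ⟨α, β⟩
  simp [mem_shiftRel, mul_inv_rev, Perm.mul_apply]

theorem shiftRel_one : shiftRel 1 u = u := by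
  ext ⟨α, β⟩
  simp [mem_shiftRel]

theorem iterate_shiftRel (n : ℕ) : (shiftRel g)^[n] u = shiftRel (g ^ n) u := by
  induction n with
  | zero => simp [shiftRel_one]
  | succ n ih => rw [Function.iterate_succ_apply', ih, shiftRel_mul, pow_succ']

theorem HasValency.shiftRel (hv : HasValency u n) : HasValency (shiftRel g u) n := by
  rintro ⟨α, β⟩ hx
  have hnbhd : nbhd (_root_.shiftRel g u) α = (nbhd u α).map g.toEmbedding := by
    ext γ
    simp [mem_shiftRel]
  change #(nbhd (_root_.shiftRel g u) α) = n
  rw [hnbhd, card_map, hv.card_nbhd (mem_shiftRel.mp hx)]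

theorem shiftRel_subset_of_mem (hg : g ∈ thinShifts hΔ hcl) (hu : u ∈ A.S) (hw : w ∈ A.S)
    (hb : b ∈ Δ) (hab : (a, b) ∈ u) (hagb : (a, g b) ∈ w) : shiftRel g u ⊆ w := by
  obtain ⟨⟨t, ht, hgt⟩, -⟩ := inv_mem hg
  have hc : ∀ {x y}, (x, y) ∈ u → (A.c w t u ≠ 0 ↔ ∃ z, (x, z) ∈ w ∧ (z, y) ∈ t) :=
    fun hxy => c_ne_zero_iff hw ht.1 hu hxy
  have hcu : A.c w t u ≠ 0 :=
    (hc hab).mpr ⟨g b, hagb, by simpa using hgt _ (apply_mem_of_mem_thinShifts hg hb)⟩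
  rintro ⟨x, y⟩ hxy
  rw [mem_shiftRel] at hxy
  obtain ⟨z, hxz, hzy⟩ := (hc hxy).mp hcu
  have hz : g⁻¹ z = g⁻¹ y :=
    ht.2.2.eq_of_mem (hgt z (mem_product.mp (ht.2.1 hzy)).1) hzy
  rwa [← (g⁻¹).injective hz]

theorem shiftRel_mem (hg : g ∈ thinShifts hΔ hcl) (hu : u ∈ A.S) (hsub : u ⊆ Γ ×ˢ Δ) :
    shiftRel g u ∈ A.S := by
  obtain ⟨⟨a, b⟩, hab⟩ := A.nonempty_mem u hu
  have hb : b ∈ Δ := (mem_product.mp (hsub hab)).2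
  obtain ⟨w, hw, hagb⟩ := A.exists_mem (a, g b)
  have h₁ : shiftRel g u ⊆ w := shiftRel_subset_of_mem hg hu hw hb hab hagb
  have h₂ : shiftRel g⁻¹ w ⊆ u :=
    shiftRel_subset_of_mem (inv_mem hg) hw hu (apply_mem_of_mem_thinShifts hg hb) hagb
      (by simpa using hab)
  have h₃ : w ⊆ shiftRel g u := by
    have := image_subset_image (f := Prod.map id g) h₂
    change shiftRel g (shiftRel g⁻¹ w) ⊆ shiftRel g u at this
    rwa [shiftRel_mul, mul_inv_cancel, shiftRel_one] at this
  rwa [h₁.antisymm h₃]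

end ShiftRel

noncomputable def nonthinRels (A : CoherentConfig Ω) (Δ : Finset Ω) : Finset (Finset (Ω × Ω)) :=
  A.S.filter fun u => u ⊆ Δ ×ˢ Δ ∧ ¬ HasValency u 1

theorem nonthinRels_subset : nonthinRels A Δ ⊆ A.S :=
  filter_subset _ _

theorem WreathFiber.hasValency_of_mem_nonthinRels (hW : WreathFiber p A Δ)
    (hu : u ∈ nonthinRels A Δ) : HasValency u p := by
  obtain ⟨hu, hsub, h1⟩ := mem_filter.mp hu
  exact (hW.valency hu hsub).resolve_left h1

theorem WreathFiber.card_nonthinRels (hp : p.Prime) (hW : WreathFiber p A Δ) :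
    #(nonthinRels A Δ) = p - 1 := by
  obtain ⟨α, hα⟩ := hW.isFiber.nonempty
  set SΔ := A.S.filter (· ⊆ Δ ×ˢ Δ)
  have hcover : SΔ.biUnion (nbhd · α) = Δ := by
    ext β
    simp only [SΔ, mem_biUnion, mem_filter, mem_nbhd]
    constructor
    · rintro ⟨u, ⟨-, hsub⟩, hβ⟩
      exact (mem_product.mp (hsub hβ)).2
    · intro hβ
      obtain ⟨u, hu, hx⟩ := A.exists_mem (α, β)
      exact ⟨u, ⟨hu, subset_product_of_mem hW.isFiber hW.isFiber hu hx hα hβ⟩, hx⟩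
  have hrow : ∀ {u n}, u ∈ A.S → u ⊆ Δ ×ˢ Δ → HasValency u n → #(nbhd u α) = n := by
    intro u n hu hsub hv
    obtain ⟨β, hβ⟩ := exists_mem_of_subset_product hW.isFiber hu hsub hα
    exact hv.card_nbhd hβ
  have hthin : SΔ.filter (HasValency · 1) = A.S.filter (IsThinOn A Δ) := by
    ext u
    simp [SΔ, IsThinOn, and_assoc]
  have hnon : SΔ.filter (fun u => ¬HasValency u 1) = nonthinRels A Δ := by
    ext u
    simp [SΔ, nonthinRels, and_assoc]
  have hsplit := sum_filter_add_sum_filter_not SΔ (HasValency · 1) fun u => #(nbhd u α)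
  rw [← card_biUnion_nbhd (filter_subset _ _), hcover, hW.card, hthin, hnon,
    sum_const_nat fun u hu => hrow (mem_filter.mp hu).2.1 (mem_filter.mp hu).2.2.1
      (mem_filter.mp hu).2.2.2,
    sum_const_nat fun u hu => hrow (nonthinRels_subset hu) (mem_filter.mp hu).2.1
      (hW.hasValency_of_mem_nonthinRels hu), hW.card_thin] at hsplit
  have : p * p = p * (1 + #(nonthinRels A Δ)) := by linarith
  have := Nat.eq_of_mul_eq_mul_left hp.pos this
  omega

theorem WreathFiber.shiftRel_mem_nonthinRels (hp : p.Prime) (hW : WreathFiber p A Δ)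
    (hg : g ∈ hW.shifts) (hu : u ∈ nonthinRels A Δ) : shiftRel g u ∈ nonthinRels A Δ := by
  obtain ⟨huS, hsub, -⟩ := mem_filter.mp hu
  have hv : HasValency (shiftRel g u) p := (hW.hasValency_of_mem_nonthinRels hu).shiftRel
  refine mem_filter.mpr ⟨shiftRel_mem hg huS hsub, fun ⟨x, y⟩ hxy => ?_, fun h1 => ?_⟩
  · obtain ⟨hx, hy⟩ := mem_product.mp (hsub (mem_shiftRel.mp hxy))
    exact mem_product.mpr ⟨hx, by simpa using apply_mem_of_mem_thinShifts hg hy⟩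
  · exact hp.one_lt.ne (h1.unique hv ((A.nonempty_mem u huS).image _))

theorem WreathFiber.shiftRel_eq_self (hp : p.Prime) (hW : WreathFiber p A Δ)
    (hg : g ∈ hW.shifts) (hu : u ∈ nonthinRels A Δ) : shiftRel g u = u := by
  refine Finset.apply_eq_self_of_iterate_prime hp
    (fun w hw => hW.shiftRel_mem_nonthinRels hp hg hw) (fun w _ => ?_) ?_ hu
  · rw [iterate_shiftRel, hW.pow_eq_one hg, shiftRel_one]
  · rw [hW.card_nonthinRels hp]
    exact Nat.sub_lt hp.pos one_pos

theorem WreathFiber.nbhd_eq_shiftOrbit (hp : p.Prime) (hW : WreathFiber p A Δ)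
    (hu : u ∈ nonthinRels A Δ) (hx : (α, β) ∈ u) : nbhd u α = shiftOrbit hW.shifts β := by
  have hβ : β ∈ Δ := (mem_product.mp ((mem_filter.mp hu).2.1 hx)).2
  refine (eq_of_subset_of_card_le (fun β' hβ' => ?_) ?_).symm
  · obtain ⟨g, hg, rfl⟩ := mem_shiftOrbit.mp hβ'
    rw [mem_nbhd, ← hW.shiftRel_eq_self hp hg hu, mem_shiftRel]
    simpa using hx
  · rw [(hW.hasValency_of_mem_nonthinRels hu).card_nbhd hx, card_shiftOrbit hβ, hW.card_shifts]

theorem WreathFiber.nbhd_star_eq_shiftOrbit (hW : WreathFiber p A Δ) (hsub : s ⊆ Δ ×ˢ Γ)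
    (hsval : HasValency (star s) p)
    (hinv : ∀ g ∈ hW.shifts, ∀ α γ, (α, γ) ∈ s → (g α, γ) ∈ s) (hx : (α, γ) ∈ s) :
    nbhd (star s) γ = shiftOrbit hW.shifts α := by
  have hα : α ∈ Δ := (mem_product.mp (hsub hx)).1
  refine (eq_of_subset_of_card_le (fun β hβ => ?_) ?_).symm
  · obtain ⟨g, hg, rfl⟩ := mem_shiftOrbit.mp hβ
    exact mem_nbhd.mpr (mem_star.mpr (hinv g hg α γ hx))
  · rw [hsval.card_nbhd (mem_star.mpr hx), card_shiftOrbit hα, hW.card_shifts]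

theorem WreathFiber.regular_of_forall_shift (hW : WreathFiber p A Δ) (hs : s ∈ A.S)
    (hsub : s ⊆ Δ ×ˢ Γ) (hsval : HasValency (star s) p)
    (hinv : ∀ g ∈ hW.shifts, ∀ α γ, (α, γ) ∈ s → (g α, γ) ∈ s) : Regular A s := by
  have hX : ∀ u, u ∈ cprod A {s} {star s} ↔ u ∈ A.S ∧ A.c s (star s) u ≠ 0 := by
    simp [cprod]
  have hY : ∀ T v, v ∈ cprod A T {s} ↔ v ∈ A.S ∧ ∃ u ∈ T, A.c u s v ≠ 0 := by
    simp [cprod]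
  rw [Regular, eq_singleton_iff_unique_mem, hY]
  constructor
  · obtain ⟨⟨a, b⟩, hab⟩ := A.nonempty_mem s hs
    have ha : a ∈ Δ := (mem_product.mp (hsub hab)).1
    refine ⟨hs, diagRel Δ, (hX _).mpr ⟨hW.isFiber, ?_⟩, ?_⟩
    · exact (c_ne_zero_iff hs (star_mem hs) hW.isFiber (mem_diagRel_self ha)).mpr
        ⟨b, hab, mem_star.mpr hab⟩
    · exact (c_ne_zero_iff hW.isFiber hs hs hab).mpr ⟨a, mem_diagRel_self ha, hab⟩
  · intro v hv
    obtain ⟨hvS, u, hu, hcu⟩ := (hY _ _).mp hv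
    obtain ⟨huS, hcs⟩ := (hX u).mp hu
    obtain ⟨⟨a, c⟩, hac⟩ := A.nonempty_mem v hvS
    obtain ⟨b, hab, hbc⟩ := (c_ne_zero_iff huS hs hvS hac).mp hcu
    obtain ⟨γ, haγ, hγb⟩ := (c_ne_zero_iff hs (star_mem hs) huS hab).mp hcs
    have hb : b ∈ shiftOrbit hW.shifts a := by
      rw [← hW.nbhd_star_eq_shiftOrbit hsub hsval hinv haγ]
      exact mem_nbhd.mpr hγb
    obtain ⟨g, hg, rfl⟩ := mem_shiftOrbit.mp hb
    exact eq_of_mem_of_mem hvS hs hac (by simpa using hinv g⁻¹ (inv_mem hg) _ _ hbc)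

theorem WreathFiber.eq_one_of_not_regular (hp : p.Prime) (hW : WreathFiber p A Δ)
    (hs : s ∈ A.S) (hsub : s ⊆ Δ ×ˢ Γ) (hsval : HasValency (star s) p) (hnreg : ¬Regular A s)
    (hg : g ∈ hW.shifts) (hx : (β, γ) ∈ s) (hgx : (g β, γ) ∈ s) : g = 1 := by
  by_contra hg1
  have hstep : ∀ α γ, (α, γ) ∈ s → (g α, γ) ∈ s := by
    obtain ⟨⟨t, ht, hgt⟩, -⟩ := hg
    have hc : A.c t s s ≠ 0 := (c_ne_zero_iff ht.1 hs hs hx).mpr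
      ⟨g β, hgt β (mem_product.mp (hsub hx)).1, hgx⟩
    intro α γ h
    obtain ⟨δ, hαδ, hδγ⟩ := (c_ne_zero_iff ht.1 hs hs h).mp hc
    rwa [ht.2.2.eq_of_mem (hgt α (mem_product.mp (hsub h)).1) hαδ]
  refine hnreg (hW.regular_of_forall_shift hs hsub hsval fun h hh => ?_)
  obtain ⟨n, rfl⟩ := hW.exists_pow_eq hp hg hg1 hh
  induction n with
  | zero => simp
  | succ n ih =>
    intro α γ h
    simpa [pow_succ', Perm.mul_apply] using hstep _ _ (ih (pow_mem hg n) α γ h)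

theorem WreathFiber.c_eq_zero_of_isThinOn (hp : p.Prime) (hW : WreathFiber p A Δ)
    (hs : s ∈ A.S) (hsub : s ⊆ Δ ×ˢ Γ) (hsval : HasValency (star s) p) (hnreg : ¬Regular A s)
    (ht : IsThinOn A Δ t) (htd : t ≠ diagRel Δ) : A.c s (star s) t = 0 := by
  by_contra hc
  obtain ⟨⟨a, b⟩, hab⟩ := A.nonempty_mem t ht.1
  have ha : a ∈ Δ := (mem_product.mp (ht.2.1 hab)).1
  obtain ⟨γ, haγ, hγb⟩ := (c_ne_zero_iff hs (star_mem hs) ht.1 hab).mp hc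
  obtain ⟨g, hg, hgt⟩ := exists_mem_thinShifts (hΔ := hW.isFiber) (hcl := hW.thinClosed) ht
  obtain rfl : g a = b := ht.2.2.eq_of_mem (hgt a ha) hab
  have hg1 : g = 1 := hW.eq_one_of_not_regular hp hs hsub hsval hnreg hg haγ (mem_star.mp hγb)
  exact htd (eq_of_mem_of_mem ht.1 hW.isFiber (by simpa [hg1] using hab) (mem_diagRel_self ha))

theorem WreathFiber.card_shiftOrbit_inter_nbhd_star (hp : p.Prime) (hW : WreathFiber p A Δ)
    (hs : s ∈ A.S) (hsub : s ⊆ Δ ×ˢ Γ) (hsval : HasValency (star s) p) (hnreg : ¬Regular A s)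
    (hx : (α, γ) ∈ s) (hβ : β ∈ Δ) : #(shiftOrbit hW.shifts β ∩ nbhd (star s) γ) = 1 := by
  set B := nbhd (star s) γ
  have hBΔ : ∀ b ∈ B, b ∈ Δ := fun b hb =>
    (mem_product.mp (hsub (mem_star.mp (mem_nbhd.mp hb)))).1
  have hsep : ∀ b ∈ B, ∀ b' ∈ B, b' ∈ shiftOrbit hW.shifts b → b = b' := by
    intro b hb b' hb' hbb'
    obtain ⟨g, hg, rfl⟩ := mem_shiftOrbit.mp hbb'
    rw [hW.eq_one_of_not_regular hp hs hsub hsval hnreg hg (mem_star.mp (mem_nbhd.mp hb))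
      (mem_star.mp (mem_nbhd.mp hb')), Perm.one_apply]
  have hcover : B.biUnion (shiftOrbit hW.shifts) = Δ := by
    refine eq_of_subset_of_card_le (fun x hx => ?_) ?_
    · obtain ⟨b, hb, hxb⟩ := mem_biUnion.mp hx
      obtain ⟨g, hg, rfl⟩ := mem_shiftOrbit.mp hxb
      exact apply_mem_of_mem_thinShifts hg (hBΔ b hb)
    · rw [card_biUnion, sum_const_nat fun b hb => (card_shiftOrbit (hBΔ b hb)).trans
        hW.card_shifts, hsval.card_nbhd (mem_star.mpr hx), hW.card, sq]
      intro b hb b' hb' hne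
      refine disjoint_left.mpr fun x hxb hxb' => hne (hsep b hb b' hb' ?_)
      exact mem_shiftOrbit_trans hxb (mem_shiftOrbit_comm.mp hxb')
  obtain ⟨b, hb, hβb⟩ := mem_biUnion.mp (hcover ▸ hβ)
  refine card_eq_one.mpr ⟨b, eq_singleton_iff_unique_mem.mpr
    ⟨mem_inter.mpr ⟨mem_shiftOrbit_comm.mp hβb, hb⟩, fun b' hb' => ?_⟩⟩
  obtain ⟨hβb', hb'⟩ := mem_inter.mp hb'
  exact (hsep b hb b' hb' (mem_shiftOrbit_trans hβb hβb')).symm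

theorem WreathFiber.c_eq_one_of_mem_nonthinRels (hp : p.Prime) (hW : WreathFiber p A Δ)
    (hs : s ∈ A.S) (hsub : s ⊆ Δ ×ˢ Γ) (hval : HasValency s p)
    (hsval : HasValency (star s) p) (hnreg : ¬Regular A s) (hu : u ∈ nonthinRels A Δ) :
    A.c s (star s) u = 1 := by
  obtain ⟨huS, husub, -⟩ := mem_filter.mp hu
  obtain ⟨α, hα⟩ := hW.isFiber.nonempty
  obtain ⟨β, hβ⟩ := exists_mem_of_subset_product hW.isFiber huS husub hα
  obtain ⟨γ, hγ⟩ := exists_mem_of_subset_product hW.isFiber hs hsub hα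
  have hcu : A.c u s s = 1 := by
    rw [← A.c_spec u huS s hs s hs _ hγ, ← hW.card_shiftOrbit_inter_nbhd_star hp hs hsub hsval
      hnreg hγ (mem_product.mp (husub hβ)).2, ← hW.nbhd_eq_shiftOrbit hp hu hβ]
    congr 1
    ext
    simp [mem_star]
  have key := card_nbhd_mul_c (α := α) huS hs hs
  rw [hcu, (hW.hasValency_of_mem_nonthinRels hu).card_nbhd hβ, hval.card_nbhd hγ] at key
  exact Nat.eq_of_mul_eq_mul_left hp.pos key

theorem c_diagRel_eq (hΔ : IsFiber A Δ) (hs : s ∈ A.S) (hsub : s ⊆ Δ ×ˢ Γ)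
    (hval : HasValency s p) : A.c s (star s) (diagRel Δ) = p := by
  obtain ⟨α, hα⟩ := hΔ.nonempty
  obtain ⟨γ, hγ⟩ := exists_mem_of_subset_product hΔ hs hsub hα
  rw [← A.c_spec s hs (star s) (star_mem hs) _ hΔ _ (mem_diagRel_self hα), ← hval.card_nbhd hγ]
  congr 1
  ext
  simp [mem_star]

theorem c_eq_zero_of_not_subset (hΔ : IsFiber A Δ) (hs : s ∈ A.S) (hsub : s ⊆ Δ ×ˢ Γ)
    (hu : u ∈ A.S) (hnsub : ¬u ⊆ Δ ×ˢ Δ) : A.c s (star s) u = 0 := by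
  by_contra hc
  obtain ⟨⟨a, b⟩, hab⟩ := A.nonempty_mem u hu
  obtain ⟨γ, haγ, hγb⟩ := (c_ne_zero_iff hs (star_mem hs) hu hab).mp hc
  exact hnsub (subset_product_of_mem hΔ hΔ hu hab (mem_product.mp (hsub haγ)).1
    (mem_product.mp (hsub (mem_star.mp hγb))).1)

theorem WreathFiber.c_star_eq (hp : p.Prime) (hW : WreathFiber p A Δ)
    (hs : s ∈ A.S) (hsub : s ⊆ Δ ×ˢ Γ) (hval : HasValency s p)
    (hsval : HasValency (star s) p) (hnreg : ¬Regular A s) (hu : u ∈ A.S) :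
    A.c s (star s) u =
      (if u = diagRel Δ then p else 0) + if u ∈ nonthinRels A Δ then 1 else 0 := by
  by_cases hd : u = diagRel Δ
  · subst hd
    have : diagRel Δ ∉ nonthinRels A Δ := fun h =>
      (mem_filter.mp h).2.2 (isThinOn_diagRel hW.isFiber).2.2
    simp [this, c_diagRel_eq hW.isFiber hs hsub hval]
  by_cases hN : u ∈ nonthinRels A Δ
  · simp [hd, hN, hW.c_eq_one_of_mem_nonthinRels hp hs hsub hval hsval hnreg hN]
  simp only [hd, hN, if_false, add_zero]
  by_cases husub : u ⊆ Δ ×ˢ Δ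
  · have hthin : IsThinOn A Δ u :=
      ⟨hu, husub, by simpa [nonthinRels, hu, husub] using hN⟩
    exact hW.c_eq_zero_of_isThinOn hp hs hsub hsval hnreg hthin hd
  · exact c_eq_zero_of_not_subset hW.isFiber hs hsub hu husub

theorem stmt12 (p : ℕ) (hp : p.Prime) (A : CoherentConfig Ω)
    (hfib : ∀ Δ : Finset Ω, IsFiber A Δ → WreathFiber p A Δ)
    (hinter : ∀ u ∈ A.S, ∀ Δ Γ : Finset Ω, IsFiber A Δ → IsFiber A Γ → Δ ≠ Γ →
      u ⊆ Δ ×ˢ Γ → HasValency u p)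
    (Δ Γ : Finset Ω) (hΔ : IsFiber A Δ) (hΓ : IsFiber A Γ) (hne : Δ ≠ Γ)
    (s : Finset (Ω × Ω)) (hs : s ∈ A.S) (hsub : s ⊆ Δ ×ˢ Γ)
    (hnreg : ¬ Regular A s) (hval : HasValency s p) :
    adjM s * adjM (star s) =
      (p : ℂ) • adjM (diagRel Δ) +
        ∑ u ∈ A.S.filter (fun u => u ⊆ Δ ×ˢ Δ ∧ ¬ HasValency u 1), adjM u ∧
    cprod A {s} {star s} =
      insert (diagRel Δ) (A.S.filter (fun u => u ⊆ Δ ×ˢ Δ ∧ ¬ HasValency u 1)) := by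
  have hW := hfib Δ hΔ
  have hsval : HasValency (star s) p :=
    hinter _ (star_mem hs) Γ Δ hΓ hΔ hne.symm (star_subset_product hsub)
  have hc := fun u (hu : u ∈ A.S) => hW.c_star_eq hp hs hsub hval hsval hnreg hu
  change _ = _ + ∑ u ∈ nonthinRels A Δ, adjM u ∧ _ = insert _ (nonthinRels A Δ)
  constructor
  · rw [adjM_mul_adjM hs (star_mem hs), sum_congr rfl fun u hu => by rw [hc u hu]]
    simp only [Nat.cast_add, Nat.cast_ite, Nat.cast_one, Nat.cast_zero, add_smul, ite_smul,
      one_smul, zero_smul, sum_add_distrib, sum_ite_eq', sum_ite_mem]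
    rw [if_pos (show diagRel Δ ∈ A.S from hΔ), inter_eq_right.mpr nonthinRels_subset]
  · ext u
    by_cases hu : u ∈ A.S
    · simp [cprod, hu, hc u hu, hp.ne_zero]
      tauto
    · have hd : u ≠ diagRel Δ := fun h => hu (h ▸ hW.isFiber)
      simp [cprod, hu, hd, nonthinRels]
end
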